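/- arXiv:2406.17814 — 2 statements merged into one kernel-verified Lean document; each statement's English description precedes it below -/
import Mathlib

section
/- For every monotone function g : ℕ → ℕ with g(j) > j for all j ≥ 1, the class Q_g is realizably learnable with sample complexity n_{Q_g}(ε,δ) ≤ ln(1/δ)·g(⌈1/ε⌉): there exists a learner A such that for every q ∈ Q_g, every (ε,δ) ∈ (0,1)², and every n ≥ ln(1/δ)·g(⌈1/ε⌉), with probability at least 1−δ over S ~ q^n we have d_TV(A(S), q) ≤ ε. -/
open scoped BigOperators ENNReal

namespace RobustDistLearn

variable {X : Type*}

/-- `p` is a probability mass function on `X`. -/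
def IsPMF (p : X → ℝ) : Prop := (∀ x, 0 ≤ p x) ∧ ∑' x, p x = 1

/-- Total variation distance between two mass functions:
`d_TV(p,q) = (1/2)·∑ₓ |p x − q x|`. -/
noncomputable def dTV (p q : X → ℝ) : ℝ := (1 / 2) * ∑' x, |p x - q x|

/-- The probability, over a sample `S` of `n` i.i.d. draws from `p`, of the event `E`. -/
noncomputable def iidProb (p : X → ℝ) (n : ℕ) (E : Set (Fin n → X)) : ℝ :=
  ∑' S : Fin n → X, E.indicator (fun T => ∏ i, p (T i)) S

/-- The mixture `η·q + (1−η)·p`. -/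
def mix (η : ℝ) (q p : X → ℝ) : X → ℝ := fun x => η * q x + (1 - η) * p x

/-- `inf_{p' ∈ C} d_TV(p, p')`. -/
noncomputable def distToClass (p : X → ℝ) (C : Set (X → ℝ)) : ℝ := sInf (dTV p '' C)

/-- A learner maps, for each sample size `n`, a tuple `S ∈ Xⁿ` to a distribution over `X`. -/
def IsLearner (A : (n : ℕ) → (Fin n → X) → (X → ℝ)) : Prop := ∀ n S, IsPMF (A n S)

/-- Realizable learnability of a class `C` of distributions. -/
def RealizablyLearnable (C : Set (X → ℝ)) : Prop :=
  ∃ A : (n : ℕ) → (Fin n → X) → (X → ℝ), IsLearner A ∧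
    ∃ nC : ℝ → ℝ → ℕ,
      ∀ p ∈ C, ∀ ε ∈ Set.Ioo (0:ℝ) 1, ∀ δ ∈ Set.Ioo (0:ℝ) 1, ∀ n : ℕ, nC ε δ ≤ n →
        1 - δ ≤ iidProb p n {S | dTV (A n S) p ≤ ε}

/-- `α`-robust (agnostic) learnability. -/
def RobustlyLearnable (C : Set (X → ℝ)) (α : ℝ) : Prop :=
  ∃ A : (n : ℕ) → (Fin n → X) → (X → ℝ), IsLearner A ∧
    ∃ nC : ℝ → ℝ → ℕ,
      ∀ p : X → ℝ, IsPMF p → ∀ ε ∈ Set.Ioo (0:ℝ) 1, ∀ δ ∈ Set.Ioo (0:ℝ) 1, ∀ n : ℕ, nC ε δ ≤ n →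
        1 - δ ≤ iidProb p n {S | dTV (A n S) p ≤ α * distToClass p C + ε}

/-- Additive `α`-robust learnability. -/
def AdditiveRobustlyLearnable (C : Set (X → ℝ)) (α : ℝ) : Prop :=
  ∃ A : (n : ℕ) → (Fin n → X) → (X → ℝ), IsLearner A ∧
    ∃ nC : ℝ → ℝ → ℕ,
      ∀ η ∈ Set.Ioo (0:ℝ) 1, ∀ q : X → ℝ, IsPMF q → ∀ p ∈ C,
        ∀ ε ∈ Set.Ioo (0:ℝ) 1, ∀ δ ∈ Set.Ioo (0:ℝ) 1, ∀ n : ℕ, nC ε δ ≤ n →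
          1 - δ ≤ iidProb (mix η q p) n {S | dTV (A n S) (mix η q p) ≤ α * η + ε}

/-- Huber additive `α`-robust learnability: the guarantee is with respect to the clean `p`. -/
def HuberAdditiveRobustlyLearnable (C : Set (X → ℝ)) (α : ℝ) : Prop :=
  ∃ A : (n : ℕ) → (Fin n → X) → (X → ℝ), IsLearner A ∧
    ∃ nC : ℝ → ℝ → ℕ,
      ∀ η ∈ Set.Ioo (0:ℝ) 1, ∀ q : X → ℝ, IsPMF q → ∀ p ∈ C,
        ∀ ε ∈ Set.Ioo (0:ℝ) 1, ∀ δ ∈ Set.Ioo (0:ℝ) 1, ∀ n : ℕ, nC ε δ ≤ n →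
          1 - δ ≤ iidProb (mix η q p) n {S | dTV (A n S) p ≤ α * η + ε}

/-- Subtractive `α`-robust learnability. -/
def SubtractiveRobustlyLearnable (C : Set (X → ℝ)) (α : ℝ) : Prop :=
  ∃ A : (n : ℕ) → (Fin n → X) → (X → ℝ), IsLearner A ∧
    ∃ nC : ℝ → ℝ → ℕ,
      ∀ η ∈ Set.Ioo (0:ℝ) 1, ∀ p : X → ℝ, IsPMF p →
        (∃ q : X → ℝ, IsPMF q ∧ mix η q p ∈ C) →
        ∀ ε ∈ Set.Ioo (0:ℝ) 1, ∀ δ ∈ Set.Ioo (0:ℝ) 1, ∀ n : ℕ, nC ε δ ≤ n →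
          1 - δ ≤ iidProb p n {S | dTV (A n S) p ≤ α * η + ε}

/-- `η`-`α`-robust learnability (known corruption level `η`). -/
def EtaRobustlyLearnable (C : Set (X → ℝ)) (η α : ℝ) : Prop :=
  ∃ A : (n : ℕ) → (Fin n → X) → (X → ℝ), IsLearner A ∧
    ∃ nC : ℝ → ℝ → ℕ,
      ∀ p : X → ℝ, IsPMF p → distToClass p C ≤ η →
        ∀ ε ∈ Set.Ioo (0:ℝ) 1, ∀ δ ∈ Set.Ioo (0:ℝ) 1, ∀ n : ℕ, nC ε δ ≤ n →
          1 - δ ≤ iidProb p n {S | dTV (A n S) p ≤ α * η + ε}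

/-- `η`-additive `α`-robust learnability (known corruption level `η`). -/
def EtaAdditiveRobustlyLearnable (C : Set (X → ℝ)) (η α : ℝ) : Prop :=
  ∃ A : (n : ℕ) → (Fin n → X) → (X → ℝ), IsLearner A ∧
    ∃ nC : ℝ → ℝ → ℕ,
      ∀ q : X → ℝ, IsPMF q → ∀ p ∈ C,
        ∀ ε ∈ Set.Ioo (0:ℝ) 1, ∀ δ ∈ Set.Ioo (0:ℝ) 1, ∀ n : ℕ, nC ε δ ≤ n →
          1 - δ ≤ iidProb (mix η q p) n {S | dTV (A n S) (mix η q p) ≤ α * η + ε}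

/-- `η`-subtractive `α`-robust learnability (known corruption level `η`). -/
def EtaSubtractiveRobustlyLearnable (C : Set (X → ℝ)) (η α : ℝ) : Prop :=
  ∃ A : (n : ℕ) → (Fin n → X) → (X → ℝ), IsLearner A ∧
    ∃ nC : ℝ → ℝ → ℕ,
      ∀ p : X → ℝ, IsPMF p →
        (∃ q : X → ℝ, IsPMF q ∧ mix η q p ∈ C) →
        ∀ ε ∈ Set.Ioo (0:ℝ) 1, ∀ δ ∈ Set.Ioo (0:ℝ) 1, ∀ n : ℕ, nC ε δ ≤ n →
          1 - δ ≤ iidProb p n {S | dTV (A n S) p ≤ α * η + ε}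

/-- The probability of an event under a `PMF`. -/
noncomputable def pmfProb {Y : Type*} (m : PMF Y) (E : Set Y) : ℝ :=
  (m.toOuterMeasure E).toReal

/-- `(ε,δ)`-differential privacy of a randomized algorithm on inputs of size `n`. -/
def IsDP {Y : Type*} {n : ℕ} (M : (Fin n → X) → PMF Y) (ε δ : ℝ) : Prop :=
  ∀ x x' : Fin n → X, (∃ i : Fin n, ∀ j : Fin n, j ≠ i → x j = x' j) →
    ∀ B : Set Y,
      (M x).toOuterMeasure B ≤
        ENNReal.ofReal (Real.exp ε) * (M x').toOuterMeasure B + ENNReal.ofReal δ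

/-- Probability, jointly over `S ~ pⁿ` and the internal randomness of `M`, of the event `E`
on the output of `M`. -/
noncomputable def randIidProb {Y : Type*} (p : X → ℝ) (n : ℕ)
    (M : (Fin n → X) → PMF Y) (E : Set Y) : ℝ :=
  ∑' S : Fin n → X, (∏ i, p (S i)) * pmfProb (M S) E

/-- Approximate DP learnability. -/
def ApproxDPLearnable (C : Set (X → ℝ)) : Prop :=
  ∃ Alg : (n : ℕ) → (Fin n → X) → PMF (X → ℝ),
    (∀ n S f, f ∈ (Alg n S).support → IsPMF f) ∧
    ∃ nC : ℝ → ℝ → ℝ → ℝ → ℕ,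
      ∀ p ∈ C, ∀ α ∈ Set.Ioo (0:ℝ) 1, ∀ β ∈ Set.Ioo (0:ℝ) 1,
        ∀ ε ∈ Set.Ioo (0:ℝ) 1, ∀ δ ∈ Set.Ioo (0:ℝ) 1, ∀ n : ℕ, nC α β ε δ ≤ n →
          IsDP (Alg n) ε δ ∧
          1 - β ≤ randIidProb p n (Alg n) {f | dTV p f ≤ α}

/-- Pure DP learnability. -/
def PureDPLearnable (C : Set (X → ℝ)) : Prop :=
  ∃ Alg : (n : ℕ) → (Fin n → X) → PMF (X → ℝ),
    (∀ n S f, f ∈ (Alg n S).support → IsPMF f) ∧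
    ∃ nC : ℝ → ℝ → ℝ → ℕ,
      ∀ p ∈ C, ∀ α ∈ Set.Ioo (0:ℝ) 1, ∀ β ∈ Set.Ioo (0:ℝ) 1, ∀ ε ∈ Set.Ioo (0:ℝ) 1,
        ∀ n : ℕ, nC α β ε ≤ n →
          IsDP (Alg n) ε 0 ∧
          1 - β ≤ randIidProb p n (Alg n) {f | dTV p f ≤ α}

/-- `α`-robust learnability by a possibly randomized learner. -/
def RandRobustlyLearnable (C : Set (X → ℝ)) (α : ℝ) : Prop :=
  ∃ Alg : (n : ℕ) → (Fin n → X) → PMF (X → ℝ),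
    (∀ n S f, f ∈ (Alg n S).support → IsPMF f) ∧
    ∃ nC : ℝ → ℝ → ℕ,
      ∀ p : X → ℝ, IsPMF p → ∀ ε ∈ Set.Ioo (0:ℝ) 1, ∀ δ ∈ Set.Ioo (0:ℝ) 1,
        ∀ n : ℕ, nC ε δ ≤ n →
          1 - δ ≤ randIidProb p n (Alg n) {f | dTV f p ≤ α * distToClass p C + ε}

/-- A class `C` admits `(τ, t, nf)` `r`-robust sample compression. -/
def AdmitsCompression (C : Set (X → ℝ)) (τ t nf : ℝ → ℕ) (r : ℝ) : Prop :=
  ∃ J : List X → List Bool → (X → ℝ),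
    (∀ L B, J L B ∈ C) ∧
    ∀ q ∈ C, ∀ p : X → ℝ, IsPMF p → dTV p q ≤ r →
      ∀ ε ∈ Set.Ioo (0:ℝ) 1,
        (2 : ℝ) / 3 ≤ iidProb p (nf ε)
          {S | ∃ L : List X, ∃ B : List Bool,
            L.length ≤ τ ε ∧ (∀ x ∈ L, ∃ i, S i = x) ∧ B.length ≤ t ε ∧
            dTV (J L B) q ≤ r + ε}

/-- The distribution `q_{i,j,k} = (1−1/j)·δ_{(0,0)} + (1/j − 1/k)·U_{A_i×{2j+1}} + (1/k)·δ_{(i,2j+2)}`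
over `ℕ × ℕ`, for a given enumeration `A` of the finite nonempty subsets of `ℕ`. -/
noncomputable def qDist (A : ℕ → Finset ℕ) (i j k : ℕ) : ℕ × ℕ → ℝ := fun x =>
  (if x = (0, 0) then 1 - 1 / (j : ℝ) else 0) +
  (if x.1 ∈ A i ∧ x.2 = 2 * j + 1 then (1 / (j : ℝ) - 1 / (k : ℝ)) / ((A i).card : ℝ) else 0) +
  (if x = (i, 2 * j + 2) then 1 / (k : ℝ) else 0)

/-- The class `Q_g = {q_{i,j,g(j)} : i, j ∈ ℕ, j ≥ 1}`. -/
def Qg (A : ℕ → Finset ℕ) (g : ℕ → ℕ) : Set (ℕ × ℕ → ℝ) :=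
  {p | ∃ i j : ℕ, 1 ≤ j ∧ p = qDist A i j (g j)}

/-- The distribution `(1−γ)·δ_{(0,0)} + γ·U_{B×{2j+1}}` over `ℕ × ℕ`. -/
noncomputable def pDist (γ : ℝ) (B : Finset ℕ) (j : ℕ) : ℕ × ℕ → ℝ := fun x =>
  (if x = (0, 0) then 1 - γ else 0) +
  (if x.1 ∈ B ∧ x.2 = 2 * j + 1 then γ / (B.card : ℝ) else 0)

/-- `g : ℕ → ℕ` is superlinear: `g(t)/t → ∞`. -/
def Superlinear (g : ℕ → ℕ) : Prop :=
  Filter.Tendsto (fun t : ℕ => (g t : ℝ) / (t : ℝ)) Filter.atTop Filter.atTop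


lemma tsum_pi_prod {X : Type*} (h : X → ℝ≥0∞) :
    ∀ n : ℕ, ∑' S : Fin n → X, ∏ i, h (S i) = (∑' x, h x) ^ n
  | 0 => by
      rw [pow_zero, tsum_eq_single (default : Fin 0 → X)]
      · simp
      · intro b hb; exact absurd (Subsingleton.elim b default) hb
  | (n+1) => by
      rw [← Equiv.tsum_eq (Fin.consEquiv (fun _ : Fin (n+1) => X)) (fun S => ∏ i, h (S i)),
        ENNReal.tsum_prod']
      have key : ∀ (a : X) (T : Fin n → X),
          (∏ i : Fin (n+1), h ((Fin.consEquiv (fun _ : Fin (n+1) => X)) (a, T) i))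
          = h a * ∏ i : Fin n, h (T i) := by
        intro a T
        rw [Fin.prod_univ_succ]
        rfl
      simp only [key]
      simp only [ENNReal.tsum_mul_left]
      rw [ENNReal.tsum_mul_right, tsum_pi_prod h n, pow_succ]
      ring

lemma tsum_pi_prod_real {X : Type*} {q : X → ℝ} (hq : ∀ x, 0 ≤ q x) (hs : Summable q) (n : ℕ) :
    Summable (fun S : Fin n → X => ∏ i, q (S i)) ∧
    ∑' S : Fin n → X, ∏ i, q (S i) = (∑' x, q x) ^ n := by
  have h1 : ∀ S : Fin n → X, ENNReal.ofReal (∏ i, q (S i)) = ∏ i, ENNReal.ofReal (q (S i)) :=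
    fun S => ENNReal.ofReal_prod_of_nonneg (fun i _ => hq _)
  have h2 : ∑' S : Fin n → X, ENNReal.ofReal (∏ i, q (S i))
      = (ENNReal.ofReal (∑' x, q x)) ^ n := by
    simp only [h1]
    rw [tsum_pi_prod (fun x => ENNReal.ofReal (q x)) n, ENNReal.ofReal_tsum_of_nonneg hq hs]
  have hfin : ∑' S : Fin n → X, ENNReal.ofReal (∏ i, q (S i)) ≠ ⊤ := by
    rw [h2]; exact ENNReal.pow_ne_top ENNReal.ofReal_ne_top
  have hsum : Summable (fun S : Fin n → X => ∏ i, q (S i)) := by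
    refine (ENNReal.summable_toReal hfin).congr (fun S => ?_)
    exact ENNReal.toReal_ofReal (Finset.prod_nonneg fun i _ => hq _)
  refine ⟨hsum, ?_⟩
  have h3 : ∑' S : Fin n → X, ∏ i, q (S i)
      = (∑' S : Fin n → X, ENNReal.ofReal (∏ i, q (S i))).toReal := by
    rw [ENNReal.tsum_toReal_eq (fun S => ENNReal.ofReal_ne_top)]
    exact tsum_congr fun S =>
      (ENNReal.toReal_ofReal (Finset.prod_nonneg fun i _ => hq _)).symm
  rw [h3, h2, ENNReal.toReal_pow, ENNReal.toReal_ofReal (tsum_nonneg hq)]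

open Classical in
/-- The learner: look for a sample point with second coordinate `2j+2`, `j ≥ 1`;
if found output the corresponding `qDist`, else output the point mass at `(0,0)`. -/
noncomputable def QgAlg (A : ℕ → Finset ℕ) (g : ℕ → ℕ) (n : ℕ) (S : Fin n → ℕ × ℕ) :
    ℕ × ℕ → ℝ :=
  if h : ∃ p : Fin n × ℕ, 1 ≤ p.2 ∧ (S p.1).2 = 2 * p.2 + 2 then
    qDist A (S h.choose.1).1 h.choose.2 (g h.choose.2)
  else fun x => if x = (0, 0) then 1 else 0

lemma tsum_strip (s : Finset ℕ) (m : ℕ) (c : ℝ) :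
    ∑' x : ℕ × ℕ, (if x.1 ∈ s ∧ x.2 = m then c else 0) = (s.card : ℝ) * c := by
  classical
  rw [tsum_eq_sum (s := s ×ˢ {m}) (fun x hx => by
    rw [if_neg]; intro hc
    exact hx (Finset.mem_product.mpr ⟨hc.1, Finset.mem_singleton.mpr hc.2⟩))]
  have h : (∑ x ∈ s ×ˢ {m}, if x.1 ∈ s ∧ x.2 = m then c else 0) = ∑ _x ∈ s ×ˢ {m}, c :=
    Finset.sum_congr rfl (fun x hx => by
      rw [Finset.mem_product, Finset.mem_singleton] at hx
      exact if_pos hx)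
  rw [h, Finset.sum_const, Finset.card_product, Finset.card_singleton, mul_one, nsmul_eq_mul]

lemma summable_ite_single {X : Type*} [DecidableEq X] (a : X) (c : ℝ) :
    Summable (fun x : X => if x = a then c else 0) :=
  summable_of_ne_finset_zero (s := {a}) (fun x hx => if_neg (by simpa using hx))

lemma summable_strip (s : Finset ℕ) (m : ℕ) (c : ℝ) :
    Summable (fun x : ℕ × ℕ => if x.1 ∈ s ∧ x.2 = m then c else 0) := by
  classical
  refine summable_of_ne_finset_zero (s := s ×ˢ {m}) (fun x hx => if_neg ?_)
  intro hc
  exact hx (Finset.mem_product.mpr ⟨hc.1, Finset.mem_singleton.mpr hc.2⟩)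

lemma qDist_summable (A : ℕ → Finset ℕ) (i j k : ℕ) : Summable (qDist A i j k) := by
  classical
  exact ((summable_ite_single _ _).add (summable_strip _ _ _)).add (summable_ite_single _ _)

lemma qDist_tsum (A : ℕ → Finset ℕ) (hA : ∀ i, (A i).Nonempty) (i j k : ℕ) :
    ∑' x, qDist A i j k x = 1 := by
  classical
  have hc : ((A i).card : ℝ) ≠ 0 := Nat.cast_ne_zero.mpr (hA i).card_pos.ne'
  unfold qDist
  rw [Summable.tsum_add ((summable_ite_single _ _).add (summable_strip _ _ _)) (summable_ite_single _ _),
    Summable.tsum_add (summable_ite_single _ _) (summable_strip _ _ _),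
    tsum_ite_eq, tsum_ite_eq, tsum_strip]
  rw [mul_comm, div_mul_cancel₀ _ hc]
  ring

lemma qDist_nonneg (A : ℕ → Finset ℕ) {i j k : ℕ} (hj : 1 ≤ j) (hjk : j ≤ k) (x : ℕ × ℕ) :
    0 ≤ qDist A i j k x := by
  have hj1 : (1:ℝ) ≤ (j:ℝ) := by exact_mod_cast hj
  have hjpos : (0:ℝ) < (j:ℝ) := lt_of_lt_of_le zero_lt_one hj1
  have hjk' : (j:ℝ) ≤ (k:ℝ) := by exact_mod_cast hjk
  have h1 : (0:ℝ) ≤ 1 - 1/(j:ℝ) := by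
    rw [sub_nonneg]
    exact div_le_one_of_le₀ hj1 (le_of_lt hjpos)
  have h2 : (0:ℝ) ≤ (1/(j:ℝ) - 1/(k:ℝ)) / ((A i).card : ℝ) := by
    apply div_nonneg _ (Nat.cast_nonneg _)
    rw [sub_nonneg]
    exact one_div_le_one_div_of_le hjpos hjk'
  have h3 : (0:ℝ) ≤ 1/(k:ℝ) := by positivity
  unfold qDist
  refine add_nonneg (add_nonneg ?_ ?_) ?_
  · split_ifs; exacts [h1, le_rfl]
  · split_ifs; exacts [h2, le_rfl]
  · split_ifs; exacts [h3, le_rfl]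

lemma qDist_isPMF (A : ℕ → Finset ℕ) (hA : ∀ i, (A i).Nonempty) {i j k : ℕ}
    (hj : 1 ≤ j) (hjk : j ≤ k) : IsPMF (qDist A i j k) :=
  ⟨qDist_nonneg A hj hjk, qDist_tsum A hA i j k⟩

lemma qDist_apply_zero (A : ℕ → Finset ℕ) (i j k : ℕ) :
    qDist A i j k (0, 0) = 1 - 1/(j:ℝ) := by
  unfold qDist
  rw [if_pos rfl, if_neg (by simp), if_neg (by simp only [Prod.mk.injEq]; omega)]
  ring

lemma qDist_apply_special (A : ℕ → Finset ℕ) (i j k : ℕ) :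
    qDist A i j k (i, 2*j+2) = 1/(k:ℝ) := by
  unfold qDist
  rw [if_neg (by simp only [Prod.mk.injEq]; omega), if_neg (by rintro ⟨-, h⟩; omega), if_pos rfl]
  ring

lemma qDist_support (A : ℕ → Finset ℕ) (i j k : ℕ) (x : ℕ × ℕ) (hx : qDist A i j k x ≠ 0) :
    x = (0,0) ∨ (x.1 ∈ A i ∧ x.2 = 2*j+1) ∨ x = (i, 2*j+2) := by
  by_contra hc
  push_neg at hc
  exact hx (by unfold qDist; rw [if_neg hc.1, if_neg (fun h => hc.2.1 h.1 h.2), if_neg hc.2.2]; ring)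

lemma dTV_self {X : Type*} (p : X → ℝ) : dTV p p = 0 := by
  simp [dTV]

lemma dTV_delta {X : Type*} [DecidableEq X] {q : X → ℝ} (hq : ∀ x, 0 ≤ q x)
    (hs : Summable q) (ht : ∑' x, q x = 1) (a : X) :
    dTV (fun x => if x = a then 1 else 0) q = 1 - q a := by
  have hqa : q a ≤ 1 := ht ▸ Summable.le_tsum hs a (fun b _ => hq b)
  have key : ∀ x, |(if x = a then (1:ℝ) else 0) - q x|
      = q x + (if x = a then 1 - 2 * q a else 0) := by
    intro x
    by_cases hx : x = a
    · subst hx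
      rw [if_pos rfl, if_pos rfl, abs_of_nonneg (by linarith)]
      ring
    · rw [if_neg hx, if_neg hx, zero_sub, abs_neg, abs_of_nonneg (hq x)]
      ring
  unfold dTV
  rw [tsum_congr key, Summable.tsum_add hs (summable_ite_single a _), ht, tsum_ite_eq]
  ring



/-- `Q_g` is realizably learnable with sample complexity
`n(ε,δ) ≤ ln(1/δ)·g(⌈1/ε⌉)`. -/
theorem Qg_realizably_learnable
    (A : ℕ → Finset ℕ) (hA_ne : ∀ i, (A i).Nonempty) (hA_inj : Function.Injective A)
    (hA_surj : ∀ s : Finset ℕ, s.Nonempty → ∃ i, A i = s)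
    (g : ℕ → ℕ) (hg_mono : Monotone g) (hg_gt : ∀ j, 1 ≤ j → j < g j) :
    ∃ Alg : (n : ℕ) → (Fin n → ℕ × ℕ) → (ℕ × ℕ → ℝ), IsLearner Alg ∧
      ∀ q ∈ Qg A g, ∀ ε ∈ Set.Ioo (0:ℝ) 1, ∀ δ ∈ Set.Ioo (0:ℝ) 1, ∀ n : ℕ,
        Real.log (1 / δ) * (g ⌈1 / ε⌉₊ : ℝ) ≤ (n : ℝ) →
        1 - δ ≤ iidProb q n {S | dTV (Alg n S) q ≤ ε} := by
  classical
  refine ⟨QgAlg A g, ?_, ?_⟩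
  · intro n S
    by_cases h : ∃ p : Fin n × ℕ, 1 ≤ p.2 ∧ (S p.1).2 = 2 * p.2 + 2
    · rw [QgAlg, dif_pos h]
      exact qDist_isPMF A hA_ne h.choose_spec.1 (hg_gt _ h.choose_spec.1).le
    · rw [QgAlg, dif_neg h]
      exact ⟨fun x => by dsimp only; split_ifs <;> norm_num, tsum_ite_eq _ _⟩
  · rintro q ⟨i, j, hj, rfl⟩ ε ⟨hε0, hε1⟩ δ ⟨hδ0, hδ1⟩ n hn
    set k := g j with hkdef
    have hjk : j < k := hg_gt j hj
    set q := qDist A i j k with hqdef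
    have hq0 : ∀ x, 0 ≤ q x := qDist_nonneg A hj hjk.le
    have hq1 : ∑' x, q x = 1 := qDist_tsum A hA_ne i j k
    have hqs : Summable q := qDist_summable A i j k
    have hjpos : (0:ℝ) < (j:ℝ) := by
      have : (1:ℝ) ≤ (j:ℝ) := by exact_mod_cast hj
      linarith
    -- the key identification lemma
    have hkey : ∀ S : Fin n → ℕ × ℕ, (∀ m, q (S m) ≠ 0) →
        (∃ p : Fin n × ℕ, 1 ≤ p.2 ∧ (S p.1).2 = 2 * p.2 + 2) → QgAlg A g n S = q := by
      intro S hS h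
      obtain ⟨hp1, hp2⟩ := h.choose_spec
      rcases qDist_support A i j k _ (hS h.choose.1) with h0 | h1 | h2
      · rw [h0] at hp2
        simp only [Prod.snd] at hp2
        omega
      · have := h1.2
        omega
      · have hj2 : h.choose.2 = j := by
          rw [h2] at hp2
          simp only [Prod.snd] at hp2
          omega
        rw [QgAlg, dif_pos h, hj2, h2]
    set F : (Fin n → ℕ × ℕ) → ℝ := fun S => ∏ m, q (S m) with hFdef
    obtain ⟨hFs, hFt⟩ := tsum_pi_prod_real hq0 hqs n
    rw [hq1, one_pow] at hFt
    set E : Set (Fin n → ℕ × ℕ) := {S | dTV (QgAlg A g n S) q ≤ ε} with hEdef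
    have hiid : iidProb q n E = ∑' S, E.indicator F S := rfl
    have hadd : (∑' S, E.indicator F S) + (∑' S, Eᶜ.indicator F S) = 1 := by
      rw [← Summable.tsum_add (hFs.indicator E) (hFs.indicator Eᶜ), ← hFt]
      exact tsum_congr fun S => by
        rw [← Pi.add_apply, Set.indicator_self_add_compl]
    suffices hbound : ∑' S, Eᶜ.indicator F S ≤ δ by
      rw [hiid]; linarith
    by_cases hc : 1/(j:ℝ) ≤ ε
    · -- trivial case: the point mass is already close enough
      have hzero : ∀ S : Fin n → ℕ × ℕ, Eᶜ.indicator F S = 0 := by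
        intro S
        by_cases hall : ∀ m, q (S m) ≠ 0
        · have hSE : S ∈ E := by
            by_cases h : ∃ p : Fin n × ℕ, 1 ≤ p.2 ∧ (S p.1).2 = 2 * p.2 + 2
            · show dTV (QgAlg A g n S) q ≤ ε
              rw [hkey S hall h, dTV_self]
              exact hε0.le
            · show dTV (QgAlg A g n S) q ≤ ε
              rw [QgAlg, dif_neg h, dTV_delta hq0 hqs hq1, hqdef, qDist_apply_zero]
              linarith
          exact Set.indicator_of_notMem (by simpa using hSE) F
        · push_neg at hall
          obtain ⟨m, hm⟩ := hall
          have hF0 : F S = 0 := Finset.prod_eq_zero (Finset.mem_univ m) hm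
          by_cases hS : S ∈ Eᶜ
          · rw [Set.indicator_of_mem hS, hF0]
          · rw [Set.indicator_of_notMem hS]
      rw [tsum_congr hzero, tsum_zero]
      exact hδ0.le
    · -- main case: must identify i, j via the special point
      set x₀ : ℕ × ℕ := (i, 2*j+2) with hx₀def
      set q' : ℕ × ℕ → ℝ := fun x => if x = x₀ then 0 else q x with hq'def
      have hq'0 : ∀ x, 0 ≤ q' x := by
        intro x
        rw [hq'def]
        dsimp only
        split_ifs
        exacts [le_rfl, hq0 x]
      have heq : ∀ x, q' x = q x - (if x = x₀ then q x₀ else 0) := by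
        intro x
        by_cases hx : x = x₀
        · subst hx; simp [hq'def]
        · simp [hq'def, hx]
      have hq's : Summable q' :=
        (hqs.sub (summable_ite_single x₀ _)).congr fun x => (heq x).symm
      have hqx₀ : q x₀ = 1/(k:ℝ) := qDist_apply_special A i j k
      have hq't : ∑' x, q' x = 1 - 1/(k:ℝ) := by
        rw [tsum_congr heq, Summable.tsum_sub hqs (summable_ite_single x₀ _), hq1, tsum_ite_eq, hqx₀]
      obtain ⟨hF's, hF't⟩ := tsum_pi_prod_real hq'0 hq's n
      rw [hq't] at hF't
      have hpt : ∀ S, Eᶜ.indicator F S ≤ ∏ m, q' (S m) := by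
        intro S
        by_cases hS : S ∈ Eᶜ
        · rw [Set.indicator_of_mem hS]
          by_cases hall : ∀ m, q (S m) ≠ 0
          · have hnx : ∀ m, S m ≠ x₀ := by
              intro m hm
              have hcond : ∃ p : Fin n × ℕ, 1 ≤ p.2 ∧ (S p.1).2 = 2 * p.2 + 2 :=
                ⟨(m, j), hj, by rw [hm]⟩
              have hSE : S ∈ E := by
                show dTV (QgAlg A g n S) q ≤ ε
                rw [hkey S hall hcond, dTV_self]
                exact hε0.le
              exact hS hSE
            refine le_of_eq (Finset.prod_congr rfl fun m _ => ?_)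
            rw [hq'def]
            dsimp only
            rw [if_neg (hnx m)]
          · push_neg at hall
            obtain ⟨m, hm⟩ := hall
            rw [show F S = 0 from Finset.prod_eq_zero (Finset.mem_univ m) hm]
            exact Finset.prod_nonneg fun m _ => hq'0 _
        · rw [Set.indicator_of_notMem hS]
          exact Finset.prod_nonneg fun m _ => hq'0 _
      have hbound1 : ∑' S, Eᶜ.indicator F S ≤ (1 - 1/(k:ℝ))^n := by
        rw [← hF't]
        exact Summable.tsum_le_tsum hpt (hFs.indicator Eᶜ) hF's
      -- now the numeric bound (1 - 1/k)^n ≤ δ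
      have hk1 : 1 ≤ k := le_of_lt (lt_of_le_of_lt hj hjk)
      have hkpos : (0:ℝ) < (k:ℝ) := by exact_mod_cast lt_of_lt_of_le Nat.zero_lt_one hk1
      have h1k : 1/(k:ℝ) ≤ 1 := by
        rw [div_le_one hkpos]; exact_mod_cast hk1
      have hbase : (0:ℝ) ≤ 1 - 1/(k:ℝ) := by linarith
      have hexp : 1 - 1/(k:ℝ) ≤ Real.exp (-(1/(k:ℝ))) := by
        have := Real.add_one_le_exp (-(1/(k:ℝ))); linarith
      have hpow : (1 - 1/(k:ℝ))^n ≤ Real.exp (-(1/(k:ℝ)))^n := pow_le_pow_left₀ hbase hexp n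
      have hexp2 : Real.exp (-(1/(k:ℝ)))^n = Real.exp ((n:ℝ) * (-(1/(k:ℝ)))) :=
        (Real.exp_nat_mul _ n).symm
      have hjε : (j:ℝ) < 1/ε := by
        have hεj : ε < 1/(j:ℝ) := lt_of_not_ge hc
        rw [lt_div_iff₀ hjpos] at hεj
        rw [lt_div_iff₀ hε0]
        linarith
      have hjceil : j ≤ ⌈1/ε⌉₊ := by
        have h1 : (j:ℝ) < (⌈1/ε⌉₊:ℝ) := lt_of_lt_of_le hjε (Nat.le_ceil _)
        exact_mod_cast h1.le
      have hkG : (k:ℝ) ≤ (g ⌈1/ε⌉₊ : ℝ) := by exact_mod_cast hg_mono hjceil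
      have hlog : 0 < Real.log (1/δ) := Real.log_pos (one_lt_one_div hδ0 hδ1)
      have hnk : Real.log (1/δ) * (k:ℝ) ≤ (n:ℝ) :=
        le_trans (mul_le_mul_of_nonneg_left hkG hlog.le) hn
      have hfin : (n:ℝ) * (-(1/(k:ℝ))) ≤ Real.log δ := by
        have hld : Real.log (1/δ) ≤ (n:ℝ)/(k:ℝ) := (le_div_iff₀ hkpos).mpr hnk
        have hlinv : Real.log δ = -Real.log (1/δ) := by
          rw [one_div, Real.log_inv]; ring
        have harith : (n:ℝ) * (-(1/(k:ℝ))) = -((n:ℝ)/(k:ℝ)) := by ring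
        rw [hlinv, harith]
        linarith
      have : Real.exp ((n:ℝ) * (-(1/(k:ℝ)))) ≤ δ := by
        calc Real.exp ((n:ℝ) * (-(1/(k:ℝ)))) ≤ Real.exp (Real.log δ) :=
              Real.exp_le_exp.mpr hfin
          _ = δ := Real.exp_log hδ0
      calc ∑' S, Eᶜ.indicator F S ≤ (1 - 1/(k:ℝ))^n := hbound1
        _ ≤ Real.exp (-(1/(k:ℝ)))^n := hpow
        _ = Real.exp ((n:ℝ) * (-(1/(k:ℝ)))) := hexp2
        _ ≤ δ := this

end RobustDistLearn
end

section
/- Let γ ∈ (0,1), k ≥ 1, j ≥ 1, and let P_{γ,4k,j} = {(1−γ)·δ_{(0,0)} + γ·U_{A×{2j+1}} : A a nonempty subset of {1,…,4k}} be a class of distributions over ℕ×ℕ. Then the realizable sample complexity of P_{γ,4k,j} at accuracy γ/8 and confidence 1/7 is at least k: for every learner A and every n < k, there exists p ∈ P_{γ,4k,j} such that the probability over S ~ p^n that d_TV(A(S), p) ≤ γ/8 is strictly less than 6/7. -/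
open scoped BigOperators ENNReal

namespace RobustDistLearn

variable {X : Type*}

/-! Restrict to the label sets `B ⊆ {1,…,4k}` of size `2k`. A sample of size `n < k` reveals a set
`T` of fewer than `k` labels, and every `B ⊇ T` gives it the same probability. Two such sets
meeting exactly in `T` differ in more than `k` labels, so their distributions are more than `γ/4`
apart and the learner's output is `γ/8`-close to at most one of them. As "meeting exactly in `T`"
is a regular graph on these sets, the output is good for at most half of them; averaging over `B`
gives one whose success probability is at most `1/2 < 6/7`. -/

open Finset

section TotalVariation

variable {X : Type*} {p q r : X → ℝ}

theorem IsPMF.summable (hp : IsPMF p) : Summable p := by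
  by_contra h
  have h1 := hp.2
  rw [tsum_eq_zero_of_not_summable h] at h1
  exact zero_ne_one h1

theorem dTV_comm (p q : X → ℝ) : dTV p q = dTV q p := by
  simp only [dTV, abs_sub_comm]

theorem dTV_triangle (hp : Summable p) (hq : Summable q) (hr : Summable r) :
    dTV p r ≤ dTV p q + dTV q r := by
  unfold dTV
  rw [← mul_add, ← ((hp.sub hq).abs).tsum_add ((hq.sub hr).abs)]
  gcongr 1
  exact Summable.tsum_le_tsum (fun x => abs_sub_le _ _ _) (hp.sub hr).abs
    ((hp.sub hq).abs.add (hq.sub hr).abs)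

theorem half_sum_abs_sub_le_dTV (hp : Summable p) (hq : Summable q) (s : Finset X) :
    1 / 2 * ∑ x ∈ s, |p x - q x| ≤ dTV p q := by
  unfold dTV
  gcongr
  exact (hp.sub hq).abs.sum_le_tsum s fun _ _ => abs_nonneg _

end TotalVariation

section IidProb

variable {X : Type*} {n : ℕ}

theorem iidProb_eq_sum_piFinset {p : X → ℝ} {D : Finset X} (hp : ∀ x ∉ D, p x = 0)
    (E : Set (Fin n → X)) :
    iidProb p n E = ∑ S ∈ Fintype.piFinset fun _ => D, E.indicator (fun T => ∏ i, p (T i)) S := by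
  refine tsum_eq_sum fun S hS => Set.indicator_apply_eq_zero.2 fun _ => ?_
  obtain ⟨i, hi⟩ : ∃ i, S i ∉ D := by simpa [Fintype.mem_piFinset] using hS
  exact prod_eq_zero (mem_univ i) (hp _ hi)

theorem exists_iidProb_le {ι : Type*} {F : Finset ι} (hF : F.Nonempty) {p : ι → X → ℝ}
    {D : Finset X} (hpD : ∀ b ∈ F, ∀ x ∉ D, p b x = 0) (hmass : ∀ b ∈ F, ∑ x ∈ D, p b x = 1)
    (E : ι → Set (Fin n → X)) {c : ℝ}
    (hE : ∀ S, ∑ b ∈ F, (E b).indicator (fun T => ∏ i, p b (T i)) S ≤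
      c * ∑ b ∈ F, ∏ i, p b (S i)) :
    ∃ b ∈ F, iidProb (p b) n (E b) ≤ c := by
  classical
  set Ω := Fintype.piFinset fun _ : Fin n => D
  have hone : ∀ b ∈ F, ∑ S ∈ Ω, ∏ i, p b (S i) = 1 := fun b hb => by
    rw [← prod_univ_sum, prod_congr rfl fun _ _ => hmass b hb, prod_const_one]
  refine exists_le_of_sum_le hF ?_
  calc ∑ b ∈ F, iidProb (p b) n (E b)
      = ∑ S ∈ Ω, ∑ b ∈ F, (E b).indicator (fun T => ∏ i, p b (T i)) S := by
        rw [sum_congr rfl fun b hb => iidProb_eq_sum_piFinset (hpD b hb) (E b), sum_comm]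
    _ ≤ ∑ S ∈ Ω, c * ∑ b ∈ F, ∏ i, p b (S i) := sum_le_sum fun S _ => hE S
    _ = ∑ b ∈ F, c := by
        rw [← mul_sum, sum_comm, sum_congr rfl hone, sum_const, sum_const, nsmul_one,
          nsmul_eq_mul, mul_comm]

end IidProb

section Packing

variable {α : Type*} [DecidableEq α] {I T B : Finset α} {m : ℕ}

theorem card_filter_inter_eq_choose (hI : I.card = 2 * m)
    (hB : B ∈ (I.powersetCard m).filter (T ⊆ ·)) :
    (((I.powersetCard m).filter (T ⊆ ·)).filter (B ∩ · = T)).card = m.choose (m - T.card) := by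
  simp only [mem_filter, mem_powersetCard] at hB
  obtain ⟨⟨hBI, hBm⟩, hTB⟩ := hB
  have hIB : (I \ B).card = m := by rw [card_sdiff_of_subset hBI]; omega
  rw [show m.choose (m - T.card) = ((I \ B).powersetCard (m - T.card)).card by
    rw [card_powersetCard, hIB]]
  refine card_nbij' (· \ T) (· ∪ T) ?_ ?_ ?_ ?_
  · intro B' hB'
    simp only [mem_coe, mem_filter, mem_powersetCard] at hB' ⊢
    obtain ⟨⟨⟨hB'I, hB'm⟩, hTB'⟩, hBB'⟩ := hB'
    refine ⟨fun x hx => ?_, by rw [card_sdiff_of_subset hTB', hB'm]⟩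
    grind
  · intro C hC
    simp only [mem_coe, mem_filter, mem_powersetCard] at hC ⊢
    obtain ⟨hCI, hCm⟩ := hC
    have hCT : Disjoint C T := disjoint_of_subset_right hTB (subset_sdiff.mp hCI).2
    refine ⟨⟨⟨?_, ?_⟩, subset_union_right⟩, ?_⟩
    · grind
    · rw [card_union_of_disjoint hCT, hCm]; have := card_le_card hTB; omega
    · grind
  · intro B' hB'
    simp only [mem_coe, mem_filter, mem_powersetCard] at hB'
    exact sdiff_union_of_subset hB'.1.2
  · intro C hC
    simp only [mem_coe, mem_powersetCard] at hC
    grind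

theorem two_mul_card_le_of_forall_inter_ne (hI : I.card = 2 * m)
    {G : Finset (Finset α)} (hG : G ⊆ (I.powersetCard m).filter (T ⊆ ·))
    (hGT : ∀ B ∈ G, ∀ B' ∈ G, B ∩ B' ≠ T) :
    2 * G.card ≤ ((I.powersetCard m).filter (T ⊆ ·)).card := by
  set F := (I.powersetCard m).filter (T ⊆ ·)
  have hcount : G.card * m.choose (m - T.card) ≤ (F \ G).card * m.choose (m - T.card) := by
    refine card_mul_le_card_mul (fun B B' => B ∩ B' = T) (fun B hB => ?_) (fun B' hB' => ?_)
    · rw [← card_filter_inter_eq_choose hI (hG hB)]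
      refine card_le_card fun B' hB' => ?_
      rw [bipartiteAbove, mem_filter, mem_sdiff]
      rw [mem_filter] at hB'
      exact ⟨⟨hB'.1, fun hB'G => hGT B hB B' hB'G hB'.2⟩, hB'.2⟩
    · rw [← card_filter_inter_eq_choose hI (mem_sdiff.mp hB').1]
      refine card_le_card fun B hB => ?_
      rw [bipartiteBelow, mem_filter] at hB
      rw [mem_filter]
      exact ⟨hG hB.1, by rw [inter_comm, hB.2]⟩
  have hGF : G.card ≤ (F \ G).card :=
    Nat.le_of_mul_le_mul_right hcount (Nat.choose_pos (Nat.sub_le _ _))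
  rw [card_sdiff_of_subset hG] at hGF
  omega

end Packing

section PackingDistributions

variable {γ : ℝ} {B B' I : Finset ℕ} {j : ℕ}

theorem pDist_zero_zero : pDist γ B j (0, 0) = 1 - γ := by
  simp [pDist]

theorem pDist_of_snd_eq {x : ℕ × ℕ} (hx : x.2 = 2 * j + 1) :
    pDist γ B j x = if x.1 ∈ B then γ / B.card else 0 := by
  have hx0 : x ≠ (0, 0) := fun h => by simp [h] at hx
  simp [pDist, hx0, hx]

theorem pDist_of_snd_ne {x : ℕ × ℕ} (hx0 : x ≠ (0, 0)) (hx : x.2 ≠ 2 * j + 1) :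
    pDist γ B j x = 0 := by
  simp [pDist, hx0, hx]

theorem pDist_eq_zero_of_notMem (hBI : B ⊆ I) {x : ℕ × ℕ}
    (hx : x ∉ insert (0, 0) (I ×ˢ {2 * j + 1})) : pDist γ B j x = 0 := by
  simp only [mem_insert, mem_product, mem_singleton, not_or, not_and] at hx
  by_cases hx2 : x.2 = 2 * j + 1
  · rw [pDist_of_snd_eq hx2, if_neg fun h => hx.2 (hBI h) hx2]
  · exact pDist_of_snd_ne hx.1 hx2

theorem summable_pDist : Summable (pDist γ B j) :=
  summable_of_ne_finset_zero fun _ hx => pDist_eq_zero_of_notMem subset_rfl hx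

theorem sum_pDist (hBI : B ⊆ I) (hB : B.Nonempty) :
    ∑ x ∈ insert (0, 0) (I ×ˢ {2 * j + 1}), pDist γ B j x = 1 := by
  have h0 : ((0 : ℕ), (0 : ℕ)) ∉ I ×ˢ {2 * j + 1} := by simp
  rw [sum_insert h0, pDist_zero_zero, sum_product, sum_congr rfl fun a _ => by
    rw [sum_singleton, pDist_of_snd_eq rfl], sum_ite_mem, inter_eq_right.2 hBI, sum_const,
    nsmul_eq_mul, mul_div_cancel₀ _ (Nat.cast_ne_zero.2 hB.card_pos.ne')]
  ring

theorem le_dTV_pDist (hγ : 0 ≤ γ) :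
    γ / 2 * (B \ B').card / B.card ≤ dTV (pDist γ B j) (pDist γ B' j) := by
  refine le_trans (le_of_eq ?_) (half_sum_abs_sub_le_dTV summable_pDist summable_pDist
    ((B \ B') ×ˢ {2 * j + 1}))
  rw [sum_product, sum_congr rfl fun a ha => by
    rw [sum_singleton, pDist_of_snd_eq rfl, pDist_of_snd_eq rfl, if_pos (mem_sdiff.1 ha).1,
      if_neg (mem_sdiff.1 ha).2, sub_zero, abs_of_nonneg (by positivity)], sum_const,
    nsmul_eq_mul]
  ring

theorem lt_dTV_pDist (hγ : 0 < γ) {k : ℕ} (hB : B.card = 2 * k) (hBB' : (B ∩ B').card < k) :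
    γ / 4 < dTV (pDist γ B j) (pDist γ B' j) := by
  refine lt_of_lt_of_le ?_ (le_dTV_pDist hγ.le)
  have hk : k < (B \ B').card := by rw [card_sdiff, inter_comm]; omega
  have hk' : (k : ℝ) < (B \ B').card := by exact_mod_cast hk
  have hk0 : (0 : ℝ) < k := by exact_mod_cast (Nat.zero_le _).trans_lt hBB'
  rw [hB, Nat.cast_mul, Nat.cast_ofNat, lt_div_iff₀ (by positivity)]
  nlinarith

end PackingDistributions

section Samples

variable {n : ℕ} {S : Fin n → ℕ × ℕ} {γ : ℝ} {B I : Finset ℕ} {j : ℕ}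

def observedLabels (S : Fin n → ℕ × ℕ) : Finset ℕ :=
  (univ.filter fun i => S i ≠ (0, 0)).image fun i => (S i).1

theorem card_observedLabels_le : (observedLabels S).card ≤ n :=
  card_image_le.trans ((card_filter_le _ _).trans (card_fin n).le)

theorem prod_pDist_eq_ite (hS : ∀ i, S i = (0, 0) ∨ (S i).2 = 2 * j + 1) :
    ∏ i, pDist γ B j (S i) =
      if observedLabels S ⊆ B then ∏ i, (if S i = (0, 0) then 1 - γ else γ / B.card) else 0 := by
  have hlabel : ∀ i, S i ≠ (0, 0) → (S i).1 ∈ observedLabels S := fun i hi =>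
    mem_image_of_mem _ (mem_filter.2 ⟨mem_univ i, hi⟩)
  split_ifs with hT
  · refine prod_congr rfl fun i _ => ?_
    split_ifs with hi
    · rw [hi, pDist_zero_zero]
    · rw [pDist_of_snd_eq ((hS i).resolve_left hi), if_pos (hT (hlabel i hi))]
  · obtain ⟨a, haT, haB⟩ := not_subset.1 hT
    obtain ⟨i, hi, rfl⟩ := mem_image.1 haT
    have hi0 : S i ≠ (0, 0) := (mem_filter.1 hi).2
    exact prod_eq_zero (mem_univ i) (by rw [pDist_of_snd_eq ((hS i).resolve_left hi0), if_neg haB])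

theorem prod_pDist_eq_zero (hS : ¬ ∀ i, S i = (0, 0) ∨ (S i).2 = 2 * j + 1) :
    ∏ i, pDist γ B j (S i) = 0 := by
  push Not at hS
  obtain ⟨i, hi0, hi⟩ := hS
  exact prod_eq_zero (mem_univ i) (pDist_of_snd_ne hi0 hi)

theorem sum_ite_dTV_le_half {q : ℕ × ℕ → ℝ} (hq : IsPMF q) (hγ : γ ∈ Set.Ioo 0 1) {k : ℕ}
    (hI : I.card = 4 * k) (hn : n < k) (S : Fin n → ℕ × ℕ) :
    ∑ B ∈ I.powersetCard (2 * k),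
        (if dTV q (pDist γ B j) ≤ γ / 8 then ∏ i, pDist γ B j (S i) else 0) ≤
      1 / 2 * ∑ B ∈ I.powersetCard (2 * k), ∏ i, pDist γ B j (S i) := by
  classical
  by_cases hS : ∀ i, S i = (0, 0) ∨ (S i).2 = 2 * j + 1
  swap
  · simp [prod_pDist_eq_zero hS]
  set T := observedLabels S
  set w := ∏ i, (if S i = (0, 0) then 1 - γ else γ / ((2 * k : ℕ) : ℝ))
  set F := (I.powersetCard (2 * k)).filter (T ⊆ ·)
  set G := F.filter fun B => dTV q (pDist γ B j) ≤ γ / 8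
  have hprod : ∀ B ∈ I.powersetCard (2 * k), ∏ i, pDist γ B j (S i) = if T ⊆ B then w else 0 :=
    fun B hB => by rw [prod_pDist_eq_ite hS, (mem_powersetCard.1 hB).2]
  have hw : 0 ≤ w := prod_nonneg fun i _ => by
    split_ifs
    · linarith [hγ.2]
    · exact div_nonneg hγ.1.le (Nat.cast_nonneg _)
  have hGF : 2 * G.card ≤ F.card := by
    refine two_mul_card_le_of_forall_inter_ne (by omega) (filter_subset _ _)
      fun B hB B' hB' hBB' => ?_
    obtain ⟨hBF, hBq⟩ := mem_filter.1 hB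
    have hB'q := (mem_filter.1 hB').2
    have hsep : γ / 4 < dTV (pDist γ B j) (pDist γ B' j) :=
      lt_dTV_pDist hγ.1 (mem_powersetCard.1 (mem_filter.1 hBF).1).2
        (by rw [hBB']; exact card_observedLabels_le.trans_lt hn)
    have htri : dTV (pDist γ B j) (pDist γ B' j) ≤ dTV (pDist γ B j) q + dTV q (pDist γ B' j) :=
      dTV_triangle summable_pDist hq.summable summable_pDist
    rw [dTV_comm (pDist γ B j) q] at htri
    linarith
  have hGF' : (2 : ℝ) * G.card ≤ F.card := by exact_mod_cast hGF
  calc ∑ B ∈ I.powersetCard (2 * k),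
          (if dTV q (pDist γ B j) ≤ γ / 8 then ∏ i, pDist γ B j (S i) else 0)
      = G.card * w := by
        rw [← nsmul_eq_mul, ← sum_const, sum_filter, sum_filter]
        refine sum_congr rfl fun B hB => ?_
        rw [hprod B hB]
        split_ifs <;> rfl
    _ ≤ 1 / 2 * (F.card * w) := by nlinarith
    _ = 1 / 2 * ∑ B ∈ I.powersetCard (2 * k), ∏ i, pDist γ B j (S i) := by
        rw [sum_congr rfl hprod, ← sum_filter, sum_const, nsmul_eq_mul]

end Samples

theorem packing_class_sample_complexity_lower_bound_general
    (γ : ℝ) (hγ : γ ∈ Set.Ioo (0:ℝ) 1) (k j : ℕ)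
    (Alg : (n : ℕ) → (Fin n → ℕ × ℕ) → (ℕ × ℕ → ℝ)) (hAlg : IsLearner Alg)
    (n : ℕ) (hn : n < k) :
    ∃ B : Finset ℕ, B ⊆ Finset.Icc 1 (4 * k) ∧ B.Nonempty ∧
      iidProb (pDist γ B j) n {S | dTV (Alg n S) (pDist γ B j) ≤ γ / 8} < 6 / 7 := by
  have hI : (Icc 1 (4 * k)).card = 4 * k := by simp
  have hB_nonempty : ∀ B ∈ (Icc 1 (4 * k)).powersetCard (2 * k), B.Nonempty := fun B hB =>
    card_pos.1 (by rw [(mem_powersetCard.1 hB).2]; omega)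
  obtain ⟨B, hB, hprob⟩ := exists_iidProb_le (powersetCard_nonempty.2 (by omega))
    (fun B hB _ hx => pDist_eq_zero_of_notMem (mem_powersetCard.1 hB).1 hx)
    (fun B hB => sum_pDist (mem_powersetCard.1 hB).1 (hB_nonempty B hB))
    (fun B => {S | dTV (Alg n S) (pDist γ B j) ≤ γ / 8}) (c := 1 / 2)
    fun S => by
      simpa only [Set.indicator_apply, Set.mem_ofPred_eq] using
        sum_ite_dTV_le_half (hAlg n S) hγ hI hn S
  exact ⟨B, (mem_powersetCard.1 hB).1, hB_nonempty B hB, by linarith⟩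

/-- the realizable sample complexity of the class
`P_{γ,4k,j} = {(1−γ)·δ_{(0,0)} + γ·U_{B×{2j+1}} : ∅ ≠ B ⊆ {1,…,4k}}` at accuracy `γ/8`
and confidence `1/7` is at least `k`. -/
theorem packing_class_sample_complexity_lower_bound
    (γ : ℝ) (hγ : γ ∈ Set.Ioo (0:ℝ) 1) (k j : ℕ) (hk : 1 ≤ k) (hj : 1 ≤ j)
    (Alg : (n : ℕ) → (Fin n → ℕ × ℕ) → (ℕ × ℕ → ℝ)) (hAlg : IsLearner Alg)
    (n : ℕ) (hn : n < k) :
    ∃ B : Finset ℕ, B ⊆ Finset.Icc 1 (4 * k) ∧ B.Nonempty ∧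
      iidProb (pDist γ B j) n {S | dTV (Alg n S) (pDist γ B j) ≤ γ / 8} < 6 / 7 :=
  packing_class_sample_complexity_lower_bound_general γ hγ k j Alg hAlg n hn

end RobustDistLearn
end
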